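/- arXiv:2205.03879 — 4 statements merged into one kernel-verified Lean document; each statement's English description precedes it below -/
import Mathlib

section
/- Let N be a natural number with at least 13 distinct prime divisors. Then φ(N) > 2·√N·(log N + 1)·2^{ω(N)}, where φ is Euler's totient function and ω(N) is the number of distinct prime divisors of N. -/
/-!
With `t = N^{1/4}`, Euler's product formula and `∏_{p ∣ N} p ≤ N` give
`φ(N)^4 ≥ N^3 ∏_{p ∣ N} (p-1)^4/p^3`. Each factor `(p-1)^4/p^3` is at least `16` once `p ≥ 23`,
and the eight primes below `23` together lose at most a factor `(37/1000)^4`, so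
`φ(N) ≥ (37/1000) 2^ω(N) t^3`. Thirteen distinct prime factors force `N ≥ 2·3·5·7·9·…·25`,
so `t ≥ 1990`, which is large enough for `2 (log N + 1) = 2 (4 log t + 1) < (37/1000) t`.
-/

open Finset Real

theorem Finset.prod_range_card_le_prod_of_monotone {f : ℕ → ℕ} (hf : Monotone f) (s : Finset ℕ) :
    ∏ i ∈ range #s, f i ≤ ∏ x ∈ s, f x := by
  induction s using Finset.induction_on_max with
  | empty => simp
  | insert a s hlt ih =>
    have ha : a ∉ s := fun h => (hlt a h).false
    have hcard : #s ≤ a := by simpa using card_le_card (fun x hx => mem_range.2 (hlt x hx))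
    rw [card_insert_of_notMem ha, prod_range_succ, prod_insert ha, mul_comm]
    exact Nat.mul_le_mul (hf hcard) ih

theorem Nat.prod_range_card_le_prod_primes {s : Finset ℕ} (hs : ∀ p ∈ s, p.Prime) :
    ∏ i ∈ range #s, max 2 (2 * i + 1) ≤ ∏ p ∈ s, p := by
  -- `p ↦ (p - 1) / 2` is injective on primes and `p ≥ max 2 (2 ((p - 1) / 2) + 1)`.
  have hodd : ∀ p ∈ s, p ≠ 2 → p % 2 = 1 := fun p hp h2 =>
    Nat.odd_iff.1 ((hs p hp).odd_of_ne_two h2)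
  have hinj : Set.InjOn (fun p => (p - 1) / 2) s := by
    intro p hp q hq hpq
    have := (hs p hp).two_le
    have := (hs q hq).two_le
    have := hodd p hp
    have := hodd q hq
    simp only at hpq
    omega
  calc ∏ i ∈ range #s, max 2 (2 * i + 1)
      = ∏ i ∈ range #(s.image fun p => (p - 1) / 2), max 2 (2 * i + 1) := by
        rw [Finset.card_image_of_injOn hinj]
    _ ≤ ∏ y ∈ s.image (fun p => (p - 1) / 2), max 2 (2 * y + 1) :=
        prod_range_card_le_prod_of_monotone (fun _ _ h => max_le_max le_rfl (by omega)) _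
    _ = ∏ p ∈ s, max 2 (2 * ((p - 1) / 2) + 1) := prod_image hinj
    _ ≤ ∏ p ∈ s, p := prod_le_prod' fun p hp => by
        have := (hs p hp).two_le
        have := hodd p hp
        omega

theorem Nat.le_prod_primes_of_thirteen_le_card {s : Finset ℕ} (hs : ∀ p ∈ s, p.Prime)
    (hcard : 13 ≤ #s) : 15811707161250 ≤ ∏ p ∈ s, p :=
  calc 15811707161250 = ∏ i ∈ range 13, max 2 (2 * i + 1) := by decide
    _ ≤ ∏ i ∈ range #s, max 2 (2 * i + 1) :=
        prod_le_prod_of_subset_of_one_le' (range_subset_range.2 hcard) fun _ _ _ => by omega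
    _ ≤ ∏ p ∈ s, p := prod_range_card_le_prod_primes hs

theorem Nat.totient_pow_four_ge (n : ℕ) :
    (n : ℝ) ^ 3 * ∏ p ∈ n.primeFactors, ((p : ℝ) - 1) ^ 4 / p ^ 3 ≤ (n.totient : ℝ) ^ 4 := by
  rcases eq_or_ne n 0 with rfl | hn
  · simp
  set P : ℝ := ∏ p ∈ n.primeFactors, (p : ℝ)
  set A : ℝ := ∏ p ∈ n.primeFactors, ((p : ℝ) - 1)
  have hP : 0 < P := prod_pos fun p hp => by exact_mod_cast (Nat.pos_of_mem_primeFactors hp)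
  have hPn : P ≤ n := by
    have := Nat.le_of_dvd (Nat.pos_of_ne_zero hn) (prod_primeFactors_dvd n)
    rw [← Nat.cast_le (α := ℝ), Nat.cast_prod] at this
    exact this
  have hφ : (n.totient : ℝ) = n * A / P := by
    rw [eq_div_iff hP.ne']
    have := congrArg (Nat.cast : ℕ → ℝ) (totient_mul_prod_primeFactors n)
    push_cast at this
    rwa [prod_congr rfl fun p hp => Nat.cast_pred (Nat.pos_of_mem_primeFactors hp)] at this
  calc (n : ℝ) ^ 3 * ∏ p ∈ n.primeFactors, ((p : ℝ) - 1) ^ 4 / p ^ 3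
      = n ^ 3 * (A ^ 4 / P ^ 3) * 1 := by rw [prod_div_distrib, prod_pow, prod_pow, mul_one]
    _ ≤ n ^ 3 * (A ^ 4 / P ^ 3) * (n / P) := by gcongr; exact (one_le_div hP).2 hPn
    _ = (n.totient : ℝ) ^ 4 := by rw [hφ]; field_simp

theorem sixteen_mul_pow_three_le_sub_one_pow_four {x : ℝ} (hx : 23 ≤ x) :
    16 * x ^ 3 ≤ (x - 1) ^ 4 := by
  nlinarith [pow_nonneg (sub_nonneg.2 hx) 3, pow_nonneg (sub_nonneg.2 hx) 4, sq_nonneg (x - 23)]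

theorem le_prod_sub_one_pow_four_div_pow_three {s : Finset ℕ} (hs : ∀ p ∈ s, p.Prime) :
    (37 / 1000 : ℝ) ^ 4 * 16 ^ #s ≤ ∏ p ∈ s, ((p : ℝ) - 1) ^ 4 / p ^ 3 := by
  set g : ℕ → ℝ := fun p => ((p : ℝ) - 1) ^ 4 / (16 * p ^ 3)
  have hg0 : ∀ p : ℕ, 0 ≤ g p := fun p => by positivity
  have hbelow : Nat.primesBelow 23 = {2, 3, 5, 7, 11, 13, 17, 19} := by decide
  have hsmall : ∀ p ∈ Nat.primesBelow 23, g p ≤ 1 := by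
    rw [hbelow]
    simp only [mem_insert, mem_singleton]
    rintro p (rfl | rfl | rfl | rfl | rfl | rfl | rfl | rfl) <;> norm_num [g]
  have hlarge : ∀ p : ℕ, 23 ≤ p → 1 ≤ g p := fun p hp => by
    have hp' : (23 : ℝ) ≤ p := by exact_mod_cast hp
    rw [one_le_div (by positivity)]
    exact sixteen_mul_pow_three_le_sub_one_pow_four hp'
  have hsub : s.filter (· < 23) ⊆ Nat.primesBelow 23 := fun p hp => by
    rw [mem_filter] at hp
    exact Nat.mem_primesBelow.2 ⟨hp.2, hs p hp.1⟩
  calc (37 / 1000 : ℝ) ^ 4 * 16 ^ #s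
      ≤ (∏ p ∈ Nat.primesBelow 23, g p) * 16 ^ #s := by
        gcongr
        rw [hbelow]
        norm_num [g]
    _ ≤ (∏ p ∈ s.filter (· < 23), g p) * 16 ^ #s := by
        refine mul_le_mul_of_nonneg_right ?_ (by positivity)
        exact prod_le_prod_of_subset_of_le_one hsub (fun p _ => hg0 p)
          fun p hp _ => hsmall p hp
    _ ≤ (∏ p ∈ s, g p) * 16 ^ #s := by
        refine mul_le_mul_of_nonneg_right ?_ (by positivity)
        refine prod_le_prod_of_subset_of_one_le (filter_subset _ s) (fun p _ => hg0 p) ?_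
        intro p hp hpf
        simp only [mem_filter, not_and, not_lt] at hpf
        exact hlarge p (hpf hp)
    _ = ∏ p ∈ s, ((p : ℝ) - 1) ^ 4 / p ^ 3 := by
        rw [← prod_const, ← prod_mul_distrib]
        refine prod_congr rfl fun p hp => ?_
        have : (p : ℝ) ≠ 0 := by exact_mod_cast (hs p hp).ne_zero
        simp only [g]
        field_simp

theorem two_mul_four_mul_log_add_one_lt {t : ℝ} (ht : 1990 ≤ t) :
    2 * (4 * log t + 1) < 37 / 1000 * t := by
  have hlin : log t - log 1990 ≤ t / 1990 - 1 := by
    rw [← log_div (by linarith) (by norm_num)]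
    exact log_le_sub_one_of_pos (by positivity)
  have h1990 : log 1990 < 11 * 0.6931471808 := by
    calc log 1990 < log (2 ^ 11) := log_lt_log (by norm_num) (by norm_num)
      _ = 11 * log 2 := by rw [log_pow]; norm_num
      _ < 11 * 0.6931471808 := by linarith [log_two_lt_d9]
  linarith

/-- Let `N` be a natural number with at least 13 distinct prime divisors. Then
`φ(N) > 2·√N·(log N + 1)·2^{ω(N)}`. -/
theorem stmt0 (N : ℕ) (h : 13 ≤ N.primeFactors.card) :
    2 * Real.sqrt N * (Real.log N + 1) * 2 ^ N.primeFactors.card < (N.totient : ℝ) := by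
  set k := N.primeFactors.card
  have hprime : ∀ p ∈ N.primeFactors, p.Prime := fun p hp => Nat.prime_of_mem_primeFactors hp
  have hN : (1990 : ℝ) ^ 4 ≤ N := by
    have hN0 : N ≠ 0 := by rintro rfl; simp [k] at h
    have := (Nat.le_prod_primes_of_thirteen_le_card hprime h).trans
      (Nat.le_of_dvd (Nat.pos_of_ne_zero hN0) (Nat.prod_primeFactors_dvd N))
    have : (15811707161250 : ℝ) ≤ N := by exact_mod_cast this
    linarith
  set t := √√(N : ℝ)
  have ht4 : t ^ 4 = N := by
    rw [show t ^ 4 = (t ^ 2) ^ 2 by ring, sq_sqrt (sqrt_nonneg _), sq_sqrt N.cast_nonneg]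
  have ht : 1990 ≤ t := by
    rw [Real.le_sqrt (by norm_num) (sqrt_nonneg _), Real.le_sqrt (by norm_num) N.cast_nonneg]
    linarith
  have htotient : 37 / 1000 * 2 ^ k * t ^ 3 ≤ (N.totient : ℝ) := by
    refine (pow_le_pow_iff_left₀ (by positivity) N.totient.cast_nonneg four_ne_zero).1 ?_
    calc (37 / 1000 * 2 ^ k * t ^ 3) ^ 4 = (N : ℝ) ^ 3 * ((37 / 1000) ^ 4 * 16 ^ k) := by
          rw [← ht4, show (16 : ℝ) ^ k = (2 ^ k) ^ 4 by rw [← pow_mul, mul_comm, pow_mul]; norm_num]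
          ring
      _ ≤ (N : ℝ) ^ 3 * ∏ p ∈ N.primeFactors, ((p : ℝ) - 1) ^ 4 / p ^ 3 := by
          gcongr; exact le_prod_sub_one_pow_four_div_pow_three hprime
      _ ≤ (N.totient : ℝ) ^ 4 := N.totient_pow_four_ge
  calc 2 * √(N : ℝ) * (log N + 1) * 2 ^ k = t ^ 2 * 2 ^ k * (2 * (4 * log t + 1)) := by
        rw [← ht4, log_pow, show √(t ^ 4) = t ^ 2 by rw [show t ^ 4 = (t ^ 2) ^ 2 by ring,
          sqrt_sq (by positivity)]]
        push_cast; ring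
    _ < t ^ 2 * 2 ^ k * (37 / 1000 * t) :=
        mul_lt_mul_of_pos_left (two_mul_four_mul_log_add_one_lt ht) (by positivity)
    _ = 37 / 1000 * 2 ^ k * t ^ 3 := by ring
    _ ≤ N.totient := htotient
end

section
/- Over the field F_p with p > 5 prime, let 2 ≤ a ≤ (p-1)/2 with gcd(a, p+1) = 1, and consider f(X) = (X+1)(X + a/(a-1))^p - Y·X^a as a polynomial in X over the rational function field F_p(Y). Then the discriminant of f equals (-1)^{(p+1)/2} · a^{pa-p+a}/(a-1)^{pa-2p+a-1} · Y^{p+1}. -/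
/-!
At a root `r` of `f = (X + 1)(X + b)^p - y X^a` we have `(r + 1)(r + b)^p = y r^a`, while
`f' = (X + b)^p - a y X^(a-1)` in characteristic `p`. Since `b (a - 1) = a`, this gives
`(r + 1) f'(r) = y (1 - a) r^(a-1) (r + b)`. Multiplying over all `p + 1` roots, and using that
`∏ (r + c) = f(-c)` for a monic polynomial of even degree, turns both sides into values of `f`
at `-1`, `0` and `-b`, all of which are explicit.
-/

open Polynomial

theorem Polynomial.Splits.prod_roots_add_of_monic {R : Type*} [CommRing R] [IsDomain R]
    {f : R[X]} (hf : f.Splits) (hm : f.Monic) (c : R) :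
    (f.roots.map (· + c)).prod = (-1) ^ f.natDegree * f.eval (-c) := by
  have hneg : f.roots.map (-c - ·) = f.roots.map fun r ↦ -1 * (r + c) :=
    Multiset.map_congr rfl fun r _ ↦ by ring
  rw [hf.eval_eq_prod_roots_of_monic hm, hneg, Multiset.prod_map_mul, Multiset.map_const',
    Multiset.prod_replicate, ← hf.natDegree_eq_card_roots, ← mul_assoc, ← pow_add,
    Even.neg_one_pow ⟨_, rfl⟩, one_mul]

noncomputable def abhyankarPoly {R : Type*} [CommRing R] (p a : ℕ) (b y : R) : R[X] :=
  (X + 1) * (X + C b) ^ p - C y * X ^ a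

section CommRing

variable {R : Type*} [CommRing R] {p a : ℕ} {b y : R}

theorem eval_abhyankarPoly (x : R) :
    (abhyankarPoly p a b y).eval x = (x + 1) * (x + b) ^ p - y * x ^ a := by
  simp [abhyankarPoly]

theorem eval_derivative_abhyankarPoly (hpR : (p : R) = 0) (x : R) :
    (derivative (abhyankarPoly p a b y)).eval x = (x + b) ^ p - y * a * x ^ (a - 1) := by
  simp only [abhyankarPoly, derivative_sub, derivative_mul, derivative_add, derivative_X,
    derivative_one, derivative_pow, derivative_C, hpR, map_zero, map_natCast, eval_sub, eval_pow,
    eval_add, eval_X, eval_C, eval_mul, eval_natCast, eval_one, eval_zero]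
  ring

theorem abhyankarPoly_map {S : Type*} [CommRing S] (φ : R →+* S) :
    (abhyankarPoly p a b y).map φ = abhyankarPoly p a (φ b) (φ y) := by
  simp [abhyankarPoly]

theorem natDegree_X_add_one_mul_X_add_C_pow [Nontrivial R] :
    ((X + 1) * (X + C b) ^ p : R[X]).natDegree = p + 1 := by
  compute_degree! <;> omega

theorem natDegree_C_mul_X_pow_lt_natDegree_X_add_one_mul [Nontrivial R] (hap : a ≤ p) :
    (C y * X ^ a : R[X]).natDegree < ((X + 1) * (X + C b) ^ p : R[X]).natDegree := by
  rw [natDegree_X_add_one_mul_X_add_C_pow]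
  exact (natDegree_C_mul_X_pow_le y a).trans_lt (by omega)

theorem abhyankarPoly_monic [Nontrivial R] (hap : a ≤ p) : (abhyankarPoly p a b y).Monic :=
  ((monic_X_add_C 1).mul ((monic_X_add_C b).pow p)).sub_of_left
    (degree_lt_degree (natDegree_C_mul_X_pow_lt_natDegree_X_add_one_mul hap))

theorem natDegree_abhyankarPoly [Nontrivial R] (hap : a ≤ p) :
    (abhyankarPoly p a b y).natDegree = p + 1 := by
  rw [abhyankarPoly,
    natDegree_sub_eq_left_of_natDegree_lt (natDegree_C_mul_X_pow_lt_natDegree_X_add_one_mul hap),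
    natDegree_X_add_one_mul_X_add_C_pow]

theorem add_one_mul_eval_derivative_of_isRoot_abhyankarPoly (hpR : (p : R) = 0) (ha : 1 ≤ a)
    (hb : b * (a - 1) = a) {r : R} (hr : (abhyankarPoly p a b y).IsRoot r) :
    (r + 1) * (derivative (abhyankarPoly p a b y)).eval r
      = y * (1 - a) * (r ^ (a - 1) * (r + b)) := by
  rw [IsRoot.def, eval_abhyankarPoly, ← Nat.sub_add_cancel ha, pow_succ] at hr
  rw [eval_derivative_abhyankarPoly hpR]
  linear_combination hr + y * r ^ (a - 1) * hb

theorem prod_eval_derivative_roots_abhyankarPoly [IsDomain R] (hpR : (p : R) = 0) (hp : Odd p)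
    (ha : 1 ≤ a) (hap : a ≤ p) (hb : b * (a - 1) = a) (hy : y ≠ 0)
    (hf : (abhyankarPoly p a b y).Splits) :
    ((abhyankarPoly p a b y).roots.map (derivative (abhyankarPoly p a b y)).eval).prod
      = (y * (1 - a)) ^ (p + 1) * b ^ (p * (a - 1) + a) := by
  set f := abhyankarPoly p a b y
  have hcard : f.roots.card = p + 1 := by
    rw [← hf.natDegree_eq_card_roots, natDegree_abhyankarPoly hap]
  have hprod_add (c : R) : (f.roots.map (· + c)).prod = f.eval (-c) := by
    rw [hf.prod_roots_add_of_monic (abhyankarPoly_monic hap), natDegree_abhyankarPoly hap,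
      hp.add_one.neg_one_pow, one_mul]
  have hprod_roots : f.roots.prod = b ^ p := by
    have h := hprod_add 0
    simp only [add_zero, neg_zero, Multiset.map_id'] at h
    rw [h, eval_abhyankarPoly, zero_pow (by omega : a ≠ 0)]
    ring
  have heval_neg_one : f.eval (-1) ≠ 0 := by
    simp [f, eval_abhyankarPoly, hy]
  apply mul_left_cancel₀ heval_neg_one
  calc f.eval (-1) * (f.roots.map (derivative f).eval).prod
      = (f.roots.map fun r ↦ (r + 1) * (derivative f).eval r).prod := by
        rw [Multiset.prod_map_mul, hprod_add]
    _ = (f.roots.map fun r ↦ y * (1 - a) * (r ^ (a - 1) * (r + b))).prod :=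
        congrArg _ (Multiset.map_congr rfl fun r hr ↦
          add_one_mul_eval_derivative_of_isRoot_abhyankarPoly hpR ha hb (isRoot_of_mem_roots hr))
    _ = (y * (1 - a)) ^ (p + 1) * f.roots.prod ^ (a - 1) * f.eval (-b) := by
        rw [Multiset.prod_map_mul, Multiset.map_const', Multiset.prod_replicate, hcard,
          Multiset.prod_map_mul, Multiset.prod_map_pow, Multiset.map_id', hprod_add, mul_assoc]
    _ = f.eval (-1) * ((y * (1 - a)) ^ (p + 1) * b ^ (p * (a - 1) + a)) := by
        simp only [f, eval_abhyankarPoly, hprod_roots, neg_add_cancel, zero_pow hp.pos.ne']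
        ring

end CommRing

theorem neg_one_pow_mul_prod_eval_derivative_roots_abhyankarPoly {K : Type*} [Field K] {p a : ℕ}
    {y : K} (hpK : (p : K) = 0) (hp : Odd p) (ha : 2 ≤ a) (hap : a ≤ p) (ha1 : (a : K) - 1 ≠ 0)
    (hy : y ≠ 0) (hf : (abhyankarPoly p a ((a : K) / (a - 1)) y).Splits) :
    (-1) ^ ((p + 1) * p / 2) * ((abhyankarPoly p a ((a : K) / (a - 1)) y).roots.map
        (derivative (abhyankarPoly p a ((a : K) / (a - 1)) y)).eval).prod
      = (-1) ^ ((p + 1) / 2) * (a : K) ^ (p * a - p + a) / ((a : K) - 1) ^ (p * a - 2 * p + a - 1)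
          * y ^ (p + 1) := by
  have hexp : p * (a - 1) + a = (p * a - 2 * p + a - 1) + (p + 1) := by
    have : 2 * p ≤ p * a := by nlinarith
    rw [Nat.mul_sub_one]
    omega
  rw [prod_eval_derivative_roots_abhyankarPoly hpK hp (by omega) hap (div_mul_cancel₀ _ ha1) hy hf,
    mul_comm (p + 1), Nat.mul_div_assoc p hp.add_one.two_dvd, pow_mul, hp.neg_one_pow,
    ← Nat.mul_sub_one, hexp, mul_pow, ← neg_sub, hp.add_one.neg_pow, div_pow]
  field_simp
  ring

theorem stmt15_general (p : ℕ) [Fact p.Prime] (hp : 5 < p) (a : ℕ) (ha2 : 2 ≤ a)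
    (ha : a ≤ (p - 1) / 2) :
    let F := RatFunc (ZMod p)
    let Y : F := RatFunc.X
    let b : F := (a : F) / ((a : F) - 1)
    let f : Polynomial F := (X + 1) * (X + C b) ^ p - C Y * X ^ a
    let K := AlgebraicClosure F
    let fK := f.map (algebraMap F K)
    ((-1) ^ ((p + 1) * p / 2) *
        (fK.roots.map (fun r => (derivative fK).eval r)).prod : K) =
      algebraMap F K
        ((-1) ^ ((p + 1) / 2) * (a : F) ^ (p * a - p + a) /
            ((a : F) - 1) ^ (p * a - 2 * p + a - 1) * Y ^ (p + 1)) := by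
  intro F Y b f K fK
  have hp_odd : Odd p := (Fact.out : p.Prime).odd_of_ne_two (by omega)
  have ha1 : ((a - 1 : ℕ) : K) ≠ 0 := by
    rw [Ne, CharP.cast_eq_zero_iff K p]
    exact fun h ↦ absurd (Nat.le_of_dvd (by omega) h) (by omega)
  have hfK : fK = abhyankarPoly p a ((a : K) / (a - 1)) (algebraMap F K Y) := by
    change (abhyankarPoly p a b Y).map (algebraMap F K) = _
    simp [abhyankarPoly_map, F, b]
  rw [hfK, neg_one_pow_mul_prod_eval_derivative_roots_abhyankarPoly (CharP.cast_eq_zero K p)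
    hp_odd ha2 (by omega) (by simpa [Nat.cast_sub (by omega : 1 ≤ a)] using ha1)
    ((_root_.map_ne_zero _).2 RatFunc.X_ne_zero) (IsAlgClosed.splits _)]
  simp [F]

open Polynomial in
/-- Discriminant formula for Abhyankar's polynomial
`f = (X+1)(X + a/(a-1))^p - Y·X^a` over `F_p(Y)`:
`Disc(f) = (-1)^{(p+1)/2} a^{pa-p+a}/(a-1)^{pa-2p+a-1} Y^{p+1}`.
Here, `f` being monic of degree `p+1`, the discriminant is expressed as
`(-1)^{(p+1)p/2} Π_i f'(r_i)` over the roots `r_i` of `f` in an algebraic closure. -/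
theorem stmt15 (p : ℕ) [Fact p.Prime] (hp : 5 < p) (a : ℕ) (ha2 : 2 ≤ a)
    (ha : a ≤ (p - 1) / 2) (hgcd : Nat.gcd a (p + 1) = 1) :
    let F := RatFunc (ZMod p)
    let Y : F := RatFunc.X
    let b : F := (a : F) / ((a : F) - 1)
    let f : Polynomial F := (X + 1) * (X + C b) ^ p - C Y * X ^ a
    let K := AlgebraicClosure F
    let fK := f.map (algebraMap F K)
    ((-1) ^ ((p + 1) * p / 2) *
        (fK.roots.map (fun r => (derivative fK).eval r)).prod : K) =
      algebraMap F K
        ((-1) ^ ((p + 1) / 2) * (a : F) ^ (p * a - p + a) /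
            ((a : F) - 1) ^ (p * a - 2 * p + a - 1) * Y ^ (p + 1)) :=
  stmt15_general p hp a ha2 ha
end

section
/- Let p > 3 be a prime and f = X^p(X-1) - T(X-4)^{p-2}(X-4/3) ∈ F_p(T)[X]. Then f is irreducible over F_p(T), and more generally over K(T) for any field extension K of F_p. -/
open Polynomial

namespace Stmt17Aux

variable {R : Type*} [CommRing R]

/-- The swap homomorphism `R[T][X] → R[X][T]`, sending the inner variable to the outer one
and vice versa. -/
noncomputable def sw (R : Type*) [CommRing R] : R[X][X] →+* R[X][X] :=
  eval₂RingHom (mapRingHom (C : R →+* R[X])) (C X)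

lemma sw_C (a : R[X]) : sw R (C a) = a.map C := eval₂_C _ _

lemma sw_X : sw R (X : R[X][X]) = C X := eval₂_X _ _

lemma sw_comp_sw : (sw R).comp (sw R) = RingHom.id R[X][X] := by
  apply ringHom_ext'
  · apply ringHom_ext'
    · ext r
      simp [sw_C]
    · show (sw R) ((sw R) (C X)) = C X
      simp [sw_C, sw_X]
  · show (sw R) ((sw R) X) = X
    simp [sw_C, sw_X]

/-- The swap ring equivalence `R[T][X] ≃ R[X][T]`. -/
noncomputable def swe (R : Type*) [CommRing R] : R[X][X] ≃+* R[X][X] :=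
  RingEquiv.ofRingHom (sw R) (sw R) sw_comp_sw sw_comp_sw

lemma swe_apply (f : R[X][X]) : swe R f = sw R f := rfl

lemma isCoprime_linear {K : Type*} [Field K] {a b : K} (h : a ≠ b) :
    IsCoprime (X - C a : K[X]) (X - C b) := by
  have hab : a - b ≠ 0 := sub_ne_zero.mpr h
  refine ⟨-C (a - b)⁻¹, C (a - b)⁻¹, ?_⟩
  calc -C (a - b)⁻¹ * (X - C a) + C (a - b)⁻¹ * (X - C b)
      = C (a - b)⁻¹ * (C a - C b) := by ring
    _ = C ((a - b)⁻¹ * (a - b)) := by rw [← C_sub, ← C_mul]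
    _ = 1 := by rw [inv_mul_cancel₀ hab, C_1]

end Stmt17Aux

open Stmt17Aux in
open Polynomial in
/-- `f = X^p(X-1) - T(X-4)^{p-2}(X-4/3)` is irreducible over `K(T)` for any field
`K` of characteristic `p` (in particular over `F_p(T)`). -/
theorem stmt17 (p : ℕ) (hp : p.Prime) (h3 : 3 < p)
    (K : Type*) [Field K] [CharP K p] :
    Irreducible
      ((X ^ p * (X - 1) - C (RatFunc.X : RatFunc K) * (X - 4) ^ (p - 2) *
        (X - C (4 / 3 : RatFunc K))) : Polynomial (RatFunc K)) := by
  classical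
  -- arithmetic facts in `K`
  have hnd : ∀ n : ℕ, 0 < n → n < p → (n : K) ≠ 0 := by
    intro n hn0 hnp h
    have h1 := (CharP.cast_eq_zero_iff K p n).mp h
    have := Nat.le_of_dvd hn0 h1
    omega
  have hp5 : 5 ≤ p := by
    have h2 := hp.two_le
    have h4 : p ≠ 4 := by rintro rfl; norm_num at hp
    omega
  have h3K : (3 : K) ≠ 0 := by have := hnd 3 (by norm_num) (by omega); exact_mod_cast this
  have h4K : (4 : K) ≠ 0 := by have := hnd 4 (by norm_num) (by omega); exact_mod_cast this
  set c : K := 4 / 3 with hc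
  have h04 : (0 : K) ≠ 4 := fun h => h4K h.symm
  have h0c : (0 : K) ≠ c := fun h => div_ne_zero h4K h3K h.symm
  have h14 : (1 : K) ≠ 4 := fun h => h3K (by linear_combination -h)
  have h1c : (1 : K) ≠ c := by
    intro h
    rw [hc, eq_div_iff h3K, one_mul] at h
    exact one_ne_zero (α := K) (by linear_combination -h)
  -- the two coefficient polynomials over `K`
  set A : K[X] := X ^ p * (X - C 1) with hA
  set B : K[X] := (X - C 4) ^ (p - 2) * (X - C c) with hB
  have hcop : IsCoprime A B := by
    have hX4 : IsCoprime (X : K[X]) (X - C 4) := by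
      have := isCoprime_linear h04; rwa [C_0, sub_zero] at this
    have hXc : IsCoprime (X : K[X]) (X - C c) := by
      have := isCoprime_linear h0c; rwa [C_0, sub_zero] at this
    have h14' : IsCoprime (X - C 1 : K[X]) (X - C 4) := isCoprime_linear h14
    have h1c' : IsCoprime (X - C 1 : K[X]) (X - C c) := isCoprime_linear h1c
    exact (((hX4.pow_right).mul_right hXc).pow_left).mul_left
      ((h14'.pow_right).mul_right h1c')
  have hBmonic : B.Monic := ((monic_X_sub_C (4:K)).pow _).mul (monic_X_sub_C c)
  have hBne : B ≠ 0 := hBmonic.ne_zero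
  -- the polynomial over `K[X]` (inner variable is `T`)
  set F : K[X][X] := X ^ p * (X - 1) - C X * (X - 4) ^ (p - 2) * (X - C (C c)) with hF
  -- `F` is monic of degree `p+1`
  have hmonic : F.Monic := by
    apply Monic.sub_of_left ((monic_X_pow p).mul (by simpa using monic_X_sub_C (1 : K[X])))
    have hd1 : (X ^ p * (X - 1) : K[X][X]).degree = (p : ℕ) + 1 := by
      rw [degree_mul, degree_X_pow]
      have : (X - 1 : K[X][X]) = X - C 1 := by simp
      rw [this, degree_X_sub_C]
    rw [hd1]
    have hC4 : (C (4 : K[X]) : K[X][X]) = 4 := map_ofNat _ 4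
    have hX4 : (X - 4 : K[X][X]) = X - C 4 := by rw [hC4]
    calc (C (X:K[X]) * (X - 4) ^ (p - 2) * (X - C (C c))).degree
        = (C (X:K[X])).degree + ((X - 4 : K[X][X]) ^ (p-2)).degree + (X - C (C c) : K[X][X]).degree := by
          rw [degree_mul, degree_mul]
      _ = 0 + (p - 2 : ℕ) + 1 := by
          rw [degree_C X_ne_zero, hX4, degree_pow, degree_X_sub_C, degree_X_sub_C]
          norm_num
      _ = ((p - 2 + 1 : ℕ) : WithBot ℕ) := by push_cast; ring
      _ < ((p + 1 : ℕ) : WithBot ℕ) := by exact_mod_cast (by omega : p - 2 + 1 < p + 1)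
      _ = (p : ℕ) + 1 := by push_cast; ring
  -- the swapped polynomial `G ∈ K[X][T]`
  set G : K[X][X] := C A - C B * X with hG
  have hswF : swe K F = G := by
    rw [swe_apply, hF, hG]
    simp only [map_sub, map_mul, map_pow, sw_X, sw_C, Polynomial.map_X, map_C, map_one,
      map_ofNat]
    rw [hA, hB]
    simp only [map_mul, map_pow, map_sub, C_1, map_ofNat]
    ring
  -- `G` is primitive
  have hprim : G.IsPrimitive := by
    intro r hr
    rw [C_dvd_iff_dvd_coeff] at hr
    have h0 := hr 0
    have h1 := hr 1
    rw [hG] at h0 h1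
    simp only [coeff_sub, coeff_C, coeff_C_mul, coeff_X_zero, coeff_X_one, mul_zero, mul_one,
      if_pos rfl, sub_zero] at h0 h1
    simp only [zero_sub, if_neg (by norm_num : (1:ℕ) ≠ 0)] at h1
    exact hcop.isUnit_of_dvd' h0 ((dvd_neg).mp h1)
  -- `G` maps to a degree-one polynomial over `K(X)`
  have hψB : algebraMap K[X] (RatFunc K) B ≠ 0 := fun h =>
    hBne ((map_eq_zero_iff _ (IsFractionRing.injective K[X] (RatFunc K))).mp h)
  have hGmap : G.map (algebraMap K[X] (RatFunc K)) =
      C (-(algebraMap K[X] (RatFunc K) B)) * X + C (algebraMap K[X] (RatFunc K) A) := by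
    rw [hG]
    simp only [Polynomial.map_sub, Polynomial.map_mul, map_C, map_X, map_neg]
    ring
  have hGirr : Irreducible G := by
    apply hprim.irreducible_of_irreducible_map_of_injective
      (IsFractionRing.injective K[X] (RatFunc K))
    apply irreducible_of_degree_eq_one
    rw [hGmap]
    exact degree_linear (neg_ne_zero.mpr hψB)
  -- hence `F` is irreducible
  have hFirr : Irreducible F :=
    (MulEquiv.irreducible_iff (swe K)).mp (hswF ▸ hGirr)
  -- transfer to `K(T)[X]` via Gauss's lemma
  have hmap : F.map (algebraMap K[X] (RatFunc K)) =
      X ^ p * (X - 1) - C (RatFunc.X : RatFunc K) * (X - 4) ^ (p - 2) *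
        (X - C (4 / 3 : RatFunc K)) := by
    rw [hF]
    simp only [Polynomial.map_sub, Polynomial.map_mul, Polynomial.map_pow, map_X, map_C,
      Polynomial.map_one, Polynomial.map_ofNat, RatFunc.algebraMap_X, RatFunc.algebraMap_C]
    congr 2
    rw [hc, map_div₀, map_ofNat, map_ofNat]
  rw [← hmap]
  exact (hmonic.irreducible_iff_irreducible_map_fraction_map).mp hFirr
end

section
/- Let G be a transitive subgroup of the symmetric group S_{p+1} (p an odd prime) containing a transposition and a p-cycle. Then G = S_{p+1}. -/
/-! The point stabilizer of the unique fixed point of a cycle moving all other points contains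
that cycle, so it acts transitively on the remaining points. A transitive group containing such a
cycle is therefore 2-transitive, hence primitive, and by Jordan's theorem a primitive permutation
group containing a transposition is the full symmetric group. -/

open Finset MulAction SubMulAction

namespace Equiv.Perm

variable {α : Type*} [Fintype α] [DecidableEq α] {G : Subgroup (Perm α)}

theorem exists_support_eq_compl_singleton {c : Perm α}
    (hc : #c.support + 1 = Fintype.card α) : ∃ a, c.support = {a}ᶜ := by
  obtain ⟨a, ha⟩ := Finset.card_eq_one.mp (by rw [Finset.card_compl]; omega : #c.supportᶜ = 1)
  exact ⟨a, (compl_eq_comm.mp ha).symm⟩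

theorem isPretransitive_stabilizer_of_isCycle_mem {c : Perm α} (hc : c.IsCycle) (hcG : c ∈ G)
    {a : α} (ha : c.support = {a}ᶜ) :
    IsPretransitive (stabilizer G a) (ofStabilizer G a) := by
  have hca : (⟨c, hcG⟩ : G) ∈ stabilizer G a :=
    mem_stabilizer_iff.mpr (notMem_support.mp (by simp [ha]))
  refine ⟨fun x y => ?_⟩
  have hmoved : ∀ z : ofStabilizer G a, c z ≠ z := fun z => by
    rw [← mem_support, ha]
    simpa using (mem_ofStabilizer_iff G a).mp z.2
  obtain ⟨i, hi⟩ := hc.exists_pow_eq (hmoved x) (hmoved y)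
  exact ⟨⟨⟨c, hcG⟩, hca⟩ ^ i, Subtype.ext hi⟩

theorem isMultiplyPretransitive_two_of_isCycle_mem [IsPretransitive G α] {c : Perm α}
    (hc : c.IsCycle) (hcG : c ∈ G) (hcard : #c.support + 1 = Fintype.card α) :
    IsMultiplyPretransitive G α 2 := by
  obtain ⟨a, ha⟩ := exists_support_eq_compl_singleton hcard
  rw [ofStabilizer.isMultiplyPretransitive (a := a), is_one_pretransitive_iff]
  exact isPretransitive_stabilizer_of_isCycle_mem hc hcG ha

theorem subgroup_eq_top_of_isCycle_mem_of_isSwap_mem [IsPretransitive G α] {c s : Perm α}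
    (hc : c.IsCycle) (hcG : c ∈ G) (hcard : #c.support + 1 = Fintype.card α)
    (hs : s.IsSwap) (hsG : s ∈ G) : G = ⊤ :=
  subgroup_eq_top_of_isPreprimitive_of_isSwap_mem
    (isPreprimitive_of_is_two_pretransitive
      (isMultiplyPretransitive_two_of_isCycle_mem hc hcG hcard)) s hs hsG

end Equiv.Perm

theorem stmt19_general (p : ℕ)
    (G : Subgroup (Equiv.Perm (Fin (p + 1))))
    (htrans : ∀ x y : Fin (p + 1), ∃ g ∈ G, g x = y)
    (hswap : ∃ s ∈ G, Equiv.Perm.IsSwap s)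
    (hcycle : ∃ c ∈ G, Equiv.Perm.IsCycle c ∧ c.support.card = p) :
    G = ⊤ := by
  have : IsPretransitive G (Fin (p + 1)) :=
    ⟨fun x y => let ⟨g, hg, hgxy⟩ := htrans x y; ⟨⟨g, hg⟩, hgxy⟩⟩
  obtain ⟨s, hsG, hs⟩ := hswap
  obtain ⟨c, hcG, hc, hcard⟩ := hcycle
  exact Equiv.Perm.subgroup_eq_top_of_isCycle_mem_of_isSwap_mem hc hcG
    (by rw [hcard, Fintype.card_fin]) hs hsG

/-- A transitive subgroup of `S_{p+1}` (`p` an odd prime) containing a transposition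
and a `p`-cycle is all of `S_{p+1}`. -/
theorem stmt19 (p : ℕ) (hp : p.Prime) (hodd : Odd p)
    (G : Subgroup (Equiv.Perm (Fin (p + 1))))
    (htrans : ∀ x y : Fin (p + 1), ∃ g ∈ G, g x = y)
    (hswap : ∃ s ∈ G, Equiv.Perm.IsSwap s)
    (hcycle : ∃ c ∈ G, Equiv.Perm.IsCycle c ∧ c.support.card = p) :
    G = ⊤ :=
  stmt19_general p G htrans hswap hcycle
end
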